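/- arXiv:2101.00544 — 5 statements merged into one kernel-verified Lean document; each statement's English description precedes it below -/
import Mathlib

section
/- Let A⁰ be a central generic arrangement of n ≥ 6 hyperplanes in ℂ³ and let T = {L₁,L₂,L₃} consist of subsets of {1,…,n} with |Lᵢ| = 4, |Lᵢ ∩ Lⱼ| = 2 for i ≠ j, and |L₁ ∪ L₂ ∪ L₃| = 6. Set H_{i,j} = ⋂_{p ∈ Lᵢ∩Lⱼ} ker f_p (a line through the origin in ℂ³). Then the span H_{1,2} + H_{1,3} + H_{2,3} has dimension 2 if and only if D_{L₁} ∩ D_{L₂} ⊆ D_{L₃}. -/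
noncomputable section

/-- A central generic arrangement of `n` hyperplanes in `ℂᵏ`. -/
def CentralGeneric {n k : ℕ} (f : Fin n → ((Fin k → ℂ) →ₗ[ℂ] ℂ)) : Prop :=
  ∀ S : Finset (Fin n), S.card = k → LinearIndependent ℂ (fun i : S => f (i : Fin n))

/-- `D f S` : translations `t` for which the hyperplanes indexed by `S` have a
common point. -/
def D {n k : ℕ} (f : Fin n → ((Fin k → ℂ) →ₗ[ℂ] ℂ)) (S : Finset (Fin n)) :
    Set (Fin n → ℂ) :=
  {t | ∃ x : Fin k → ℂ, ∀ i ∈ S, f i x = t i}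

/-- `H_{i,j} = ⋂_{p ∈ Lᵢ ∩ Lⱼ} ker f_p`. -/
def Hij {n k : ℕ} (f : Fin n → ((Fin k → ℂ) →ₗ[ℂ] ℂ)) {r : ℕ}
    (L : Fin r → Finset (Fin n)) (i j : Fin r) : Submodule ℂ (Fin k → ℂ) :=
  ⨅ p ∈ L i ∩ L j, LinearMap.ker (f p)

/-!
If `t ∈ D_{L₁} ∩ D_{L₂}` is realised by points `x` and `y`, then `x - y ∈ H_{1,2}`, and since
`L₃ ⊆ L₁ ∪ L₂`, `t ∈ D_{L₃}` exactly when `x - y ∈ H_{1,3} + H_{2,3}`. Every vector of `H_{1,2}`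
occurs as such a difference, so 3-dependency says `H_{1,2} ⊆ H_{1,3} + H_{2,3}`. Genericity makes
`H_{1,3}` and `H_{2,3}` two distinct lines, so their sum is a plane, and the inclusion holds iff
the whole span is 2-dimensional.
-/

open Module

section Translations

variable {n k r : ℕ} {f : Fin n → ((Fin k → ℂ) →ₗ[ℂ] ℂ)} {L : Fin r → Finset (Fin n)}

theorem mem_Hij {i j : Fin r} {v : Fin k → ℂ} :
    v ∈ Hij f L i j ↔ ∀ p ∈ L i ∩ L j, f p v = 0 := by
  simp [Hij]

theorem mem_D_iff_sub_mem_sup {i j l : Fin r} (hl : L l ⊆ L i ∪ L j) {t : Fin n → ℂ}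
    {x y : Fin k → ℂ} (hx : ∀ p ∈ L i, f p x = t p) (hy : ∀ p ∈ L j, f p y = t p) :
    t ∈ D f (L l) ↔ x - y ∈ Hij f L i l ⊔ Hij f L j l := by
  constructor
  · rintro ⟨z, hz⟩
    rw [← sub_add_sub_cancel x z y]
    refine Submodule.add_mem_sup (mem_Hij.2 fun p hp => ?_) (mem_Hij.2 fun p hp => ?_)
    · rw [Finset.mem_inter] at hp
      rw [map_sub, hx p hp.1, hz p hp.2, sub_self]
    · rw [Finset.mem_inter] at hp
      rw [map_sub, hy p hp.1, hz p hp.2, sub_self]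
  · intro h
    obtain ⟨u, hu, w, hw, huw⟩ := Submodule.mem_sup.1 h
    refine ⟨x - u, fun p hp => ?_⟩
    by_cases hpi : p ∈ L i
    · rw [map_sub, hx p hpi, mem_Hij.1 hu p (Finset.mem_inter.2 ⟨hpi, hp⟩), sub_zero]
    · have hpj : p ∈ L j := (Finset.mem_union.1 (hl hp)).resolve_left hpi
      rw [show x - u = y + w by linear_combination (norm := module) -huw,
        map_add, hy p hpj, mem_Hij.1 hw p (Finset.mem_inter.2 ⟨hpj, hp⟩), add_zero]

theorem D_inter_subset_iff {i j l : Fin r} (hl : L l ⊆ L i ∪ L j) :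
    D f (L i) ∩ D f (L j) ⊆ D f (L l) ↔ Hij f L i j ≤ Hij f L i l ⊔ Hij f L j l := by
  constructor
  · intro h v hv
    classical
    let t : Fin n → ℂ := fun p => if p ∈ L i then f p v else 0
    have hvt : ∀ p ∈ L i, f p v = t p := fun p hp => (if_pos hp).symm
    have h0t : ∀ p ∈ L j, f p 0 = t p := fun p hp => by
      by_cases hpi : p ∈ L i <;> simp [t, hpi, mem_Hij.1 hv p, hp]
    simpa using (mem_D_iff_sub_mem_sup hl hvt h0t).1 (h ⟨⟨v, hvt⟩, ⟨0, h0t⟩⟩)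
  · rintro h t ⟨⟨x, hx⟩, ⟨y, hy⟩⟩
    refine (mem_D_iff_sub_mem_sup hl hx hy).2 (h (mem_Hij.2 fun p hp => ?_))
    rw [Finset.mem_inter] at hp
    rw [map_sub, hx p hp.1, hy p hp.2, sub_self]

end Translations

theorem finrank_biInf_ker_add_card {K V ι : Type*} [Field K] [AddCommGroup V] [Module K V]
    [FiniteDimensional K V] {f : ι → Dual K V} {S : Finset ι}
    (hS : LinearIndependent K fun i : S => f i) :
    finrank K ↥(⨅ p ∈ S, LinearMap.ker (f p) : Submodule K V) + S.card = finrank K V := by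
  let W := Submodule.span K (Set.range fun i : S => f i)
  have h : ⨅ p ∈ S, LinearMap.ker (f p) = W.dualCoannihilator := SetLike.ext' (by ext; simp [W])
  rw [h, ← Subspace.finrank_add_finrank_dualCoannihilator_eq W, finrank_span_eq_card hS,
    Fintype.card_coe, add_comm]

theorem finrank_sup_eq_iff_le {K V : Type*} [Field K] [AddCommGroup V] [Module K V]
    [FiniteDimensional K V] {P Q : Submodule K V} {m : ℕ} (hP : finrank K P = m) :
    finrank K ↥(Q ⊔ P) = m ↔ Q ≤ P := by
  refine ⟨fun h => ?_, fun h => by rw [sup_eq_right.2 h, hP]⟩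
  exact le_sup_left.trans (Submodule.eq_of_le_of_finrank_eq le_sup_right (hP.trans h.symm)).ge

namespace CentralGeneric

variable {n k : ℕ} {f : Fin n → ((Fin k → ℂ) →ₗ[ℂ] ℂ)}

theorem linearIndependent (hf : CentralGeneric f) (hkn : k ≤ n) {S : Finset (Fin n)}
    (hS : S.card ≤ k) : LinearIndependent ℂ fun i : S => f i := by
  obtain ⟨T, hST, -, hT⟩ :=
    Finset.exists_subsuperset_card_eq (Finset.subset_univ S) hS (by simpa using hkn)
  exact (hf T hT).comp (fun i : S => ⟨i, hST i.2⟩) fun _ _ h => Subtype.ext (Subtype.mk.inj h)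

theorem biInf_ker_eq_bot (hf : CentralGeneric f) {S : Finset (Fin n)} (hS : k ≤ S.card) :
    ⨅ p ∈ S, LinearMap.ker (f p) = ⊥ := by
  obtain ⟨T, hTS, hT⟩ := Finset.exists_subset_card_eq hS
  have hrank := finrank_biInf_ker_add_card (hf T hT)
  rw [hT, finrank_fin_fun, Nat.add_eq_right, Submodule.finrank_eq_zero] at hrank
  exact eq_bot_iff.2 (hrank ▸ biInf_mono fun p hp => hTS hp)

end CentralGeneric

theorem finrank_Hij_sup_Hij {n r : ℕ} {f : Fin n → ((Fin 3 → ℂ) →ₗ[ℂ] ℂ)}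
    (hf : CentralGeneric f) (hn : 3 ≤ n) {L : Fin r → Finset (Fin n)} {i j l : Fin r}
    (hil : (L i ∩ L l).card = 2) (hjl : (L j ∩ L l).card = 2)
    (hcover : 3 ≤ (L i ∩ L l ∪ L j ∩ L l).card) :
    finrank ℂ ↥(Hij f L i l ⊔ Hij f L j l) = 2 := by
  have hline {a b : Fin r} (hab : (L a ∩ L b).card = 2) : finrank ℂ (Hij f L a b) = 1 := by
    have h := finrank_biInf_ker_add_card (hf.linearIndependent hn (S := L a ∩ L b) (by omega))
    rw [hab, finrank_fin_fun] at h
    exact Nat.add_right_cancel h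
  have hbot : Hij f L i l ⊓ Hij f L j l = ⊥ := by
    rw [Hij, Hij, ← Finset.iInf_union]
    exact hf.biInf_ker_eq_bot hcover
  have h := Submodule.finrank_sup_add_finrank_inf_eq (Hij f L i l) (Hij f L j l)
  rw [hbot, finrank_bot, hline hil, hline hjl] at h
  exact h

theorem dependent_iff_three_dependent_general {n : ℕ}
    (f : Fin n → ((Fin 3 → ℂ) →ₗ[ℂ] ℂ)) (hf : CentralGeneric f)
    (L : Fin 3 → Finset (Fin n)) (hcard : ∀ i, (L i).card = 4)
    (hint : ∀ i j, i ≠ j → (L i ∩ L j).card = 2)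
    (hunion : (L 0 ∪ L 1 ∪ L 2).card = 6) :
    Module.finrank ℂ (Hij f L 0 1 ⊔ Hij f L 0 2 ⊔ Hij f L 1 2 :
        Submodule ℂ (Fin 3 → ℂ)) = 2 ↔
      D f (L 0) ∩ D f (L 1) ⊆ D f (L 2) := by
  have hn : 3 ≤ n := by
    have h := Finset.card_le_univ (L 0 ∪ L 1 ∪ L 2)
    rw [hunion, Fintype.card_fin] at h
    omega
  have hcover : L 2 ⊆ L 0 ∪ L 1 := by
    have h01 := Finset.card_union_add_card_inter (L 0) (L 1)
    rw [hcard 0, hcard 1, hint 0 1 (by decide)] at h01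
    exact Finset.union_eq_left.1
      (Finset.eq_of_subset_of_card_le Finset.subset_union_left (by omega)).symm
  have hplane : finrank ℂ ↥(Hij f L 0 2 ⊔ Hij f L 1 2) = 2 := by
    refine finrank_Hij_sup_Hij hf hn (hint 0 2 (by decide)) (hint 1 2 (by decide)) ?_
    rw [← Finset.union_inter_distrib_right, Finset.inter_eq_right.2 hcover, hcard 2]
    decide
  rw [sup_assoc, finrank_sup_eq_iff_le hplane, D_inter_subset_iff hcover]

/-- Theorem: for a central generic arrangement of `n ≥ 6` hyperplanes in `ℂ³` and
`T = {L₁,L₂,L₃}` with `|Lᵢ| = 4`, `|Lᵢ ∩ Lⱼ| = 2` (`i ≠ j`), `|L₁ ∪ L₂ ∪ L₃| = 6`,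
the span `H_{1,2} + H_{1,3} + H_{2,3}` has dimension 2 (the Libgober–Settepanella
dependency condition) iff `D_{L₁} ∩ D_{L₂} ⊆ D_{L₃}` (3-dependency). -/
theorem dependent_iff_three_dependent {n : ℕ} (hn : 6 ≤ n)
    (f : Fin n → ((Fin 3 → ℂ) →ₗ[ℂ] ℂ)) (hf : CentralGeneric f)
    (L : Fin 3 → Finset (Fin n)) (hcard : ∀ i, (L i).card = 4)
    (hint : ∀ i j, i ≠ j → (L i ∩ L j).card = 2)
    (hunion : (L 0 ∪ L 1 ∪ L 2).card = 6) :
    Module.finrank ℂ (Hij f L 0 1 ⊔ Hij f L 0 2 ⊔ Hij f L 1 2 :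
        Submodule ℂ (Fin 3 → ℂ)) = 2 ↔
      D f (L 0) ∩ D f (L 1) ⊆ D f (L 2) :=
  dependent_iff_three_dependent_general f hf L hcard hint hunion
end
end

section
/- Let A⁰ be a central generic arrangement of n hyperplanes in ℂᵏ and let S ⊆ {1,…,n} with |S| ≥ k+1. Then D_S = ⋂ { D_L : L ⊆ S, |L| = k+1 }; that is, a tuple of translated hyperplanes indexed by S has a common point if and only if every k+1 of them have a common point. -/
noncomputable section

lemma inj_of_li {k : ℕ} {ι : Type*} [Fintype ι] (hcard : Fintype.card ι = k)
    (g : ι → ((Fin k → ℂ) →ₗ[ℂ] ℂ)) (hg : LinearIndependent ℂ g)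
    {x y : Fin k → ℂ} (h : ∀ i, g i x = g i y) : x = y := by
  rcases Nat.eq_zero_or_pos k with hk | hk
  · subst hk; exact Subsingleton.elim x y
  have : Nonempty ι := Fintype.card_pos_iff.mp (hcard ▸ hk)
  have hfr : Fintype.card ι = Module.finrank ℂ ((Fin k → ℂ) →ₗ[ℂ] ℂ) := by
    simp [hcard, Module.finrank_linearMap]
  let b := basisOfLinearIndependentOfCardEqFinrank hg hfr
  have hb : ∀ i, b i = g i := fun i => by
    simp [b, coe_basisOfLinearIndependentOfCardEqFinrank]
  have hxy : x - y = 0 := by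
    rw [← Module.forall_dual_apply_eq_zero_iff ℂ]
    intro φ
    rw [← b.sum_repr φ]
    simp only [LinearMap.coe_sum, Finset.sum_apply, LinearMap.smul_apply]
    refine Finset.sum_eq_zero fun i _ => ?_
    rw [hb i]
    simp [map_sub, h i]
  exact sub_eq_zero.mp hxy

/-- Theorem: for a central generic arrangement of `n` hyperplanes in `ℂᵏ` and
`S ⊆ [n]` with `|S| ≥ k + 1`, one has `D_S = ⋂ {D_L : L ⊆ S, |L| = k+1}`:
the hyperplanes indexed by `S` have a common point iff every `k+1` of them do. -/
theorem D_eq_iInter {n k : ℕ} (hkn : k < n)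
    (f : Fin n → ((Fin k → ℂ) →ₗ[ℂ] ℂ)) (hf : CentralGeneric f)
    (S : Finset (Fin n)) (hS : k + 1 ≤ S.card) :
    D f S = ⋂ L ∈ {L : Finset (Fin n) | L ⊆ S ∧ L.card = k + 1}, D f L := by
  ext t
  simp only [Set.mem_iInter, Set.mem_setOf_eq]
  constructor
  · rintro ⟨x, hx⟩ L ⟨hLS, _⟩
    exact ⟨x, fun i hi => hx i (hLS hi)⟩
  · intro h
    obtain ⟨T, hTS, hTcard⟩ := Finset.exists_subset_card_eq (le_of_lt hS)
    have hTlt : T ⊂ S := Finset.ssubset_iff_subset_ne.mpr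
      ⟨hTS, fun hEq => by rw [hEq] at hTcard; omega⟩
    obtain ⟨j, hjS, hjT⟩ := Finset.exists_of_ssubset hTlt
    have hli := hf T hTcard
    have hTfin : Fintype.card ↥T = k := by simp [hTcard]
    -- the common point of T ∪ {j}
    obtain ⟨x, hx⟩ := h (insert j T) ⟨Finset.insert_subset hjS hTS,
      by rw [Finset.card_insert_of_notMem hjT, hTcard]⟩
    refine ⟨x, fun m hmS => ?_⟩
    by_cases hmT : m ∈ T
    · exact hx m (Finset.mem_insert_of_mem hmT)
    · obtain ⟨y, hy⟩ := h (insert m T) ⟨Finset.insert_subset hmS hTS,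
        by rw [Finset.card_insert_of_notMem hmT, hTcard]⟩
      have hxy : y = x := inj_of_li hTfin (fun i : T => f i) hli
        (fun i => by
          rw [hy i (Finset.mem_insert_of_mem i.2), hx i (Finset.mem_insert_of_mem i.2)])
      rw [← hxy]
      exact hy m (Finset.mem_insert_self m T)
end
end

section
/- Let H₁,…,Hₙ be a central arrangement of n > k hyperplanes in ℂᵏ given as Hᵢ = ker fᵢ for nonzero linear functionals fᵢ. Then every k of the functionals f₁,…,fₙ are linearly independent if and only if there exists t ∈ ℂⁿ such that the translated arrangement H₁^{t₁},…,Hₙ^{tₙ} is a generic arrangement in the classical sense, i.e., every m ≤ k of the translated hyperplanes intersect in an affine subspace of dimension k−m and no k+1 of them have a common point. -/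
noncomputable section

/-- The translated arrangement `H₁^{t₁},…,Hₙ^{tₙ}` is generic in the classical
sense: every `m ≤ k` of the hyperplanes intersect in an affine subspace of
dimension `k - m`, and no `k + 1` of them have a common point. -/
def IsGenericTranslate {n k : ℕ} (f : Fin n → ((Fin k → ℂ) →ₗ[ℂ] ℂ))
    (t : Fin n → ℂ) : Prop :=
  (∀ S : Finset (Fin n), S.card ≤ k →
    ∃ (W : Submodule ℂ (Fin k → ℂ)) (x₀ : Fin k → ℂ),
      {x : Fin k → ℂ | ∀ i ∈ S, f i x = t i} = (fun w => x₀ + w) '' (W : Set (Fin k → ℂ)) ∧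
      Module.finrank ℂ W = k - S.card) ∧
  (∀ S : Finset (Fin n), S.card = k + 1 → {x : Fin k → ℂ | ∀ i ∈ S, f i x = t i} = ∅)

/-- Evaluation of the arrangement functionals indexed by a finset. -/
def arrEval {n k : ℕ} (f : Fin n → ((Fin k → ℂ) →ₗ[ℂ] ℂ)) (S : Finset (Fin n)) :
    (Fin k → ℂ) →ₗ[ℂ] ({ x // x ∈ S } → ℂ) :=
  LinearMap.pi (fun i => f (i : Fin n))

lemma dual_pi_apply {ι : Type*} [Fintype ι] [DecidableEq ι]
    (φ : (ι → ℂ) →ₗ[ℂ] ℂ) (y : ι → ℂ) :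
    φ y = ∑ i, y i * φ (Pi.single i 1) := by
  have hy : y = ∑ i, (y i) • (Pi.single i 1 : ι → ℂ) := by
    ext j
    simp [Pi.single_apply]
  calc φ y = φ (∑ i, (y i) • (Pi.single i 1 : ι → ℂ)) := by rw [← hy]
    _ = ∑ i, y i * φ (Pi.single i 1) := by
        rw [map_sum]; simp [smul_eq_mul]

lemma surj_of_li {n k : ℕ} (f : Fin n → ((Fin k → ℂ) →ₗ[ℂ] ℂ)) (S : Finset (Fin n))
    (hli : LinearIndependent ℂ (fun i : S => f (i : Fin n))) :
    Function.Surjective (arrEval f S) := by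
  by_contra hns
  rw [← LinearMap.range_eq_top] at hns
  obtain ⟨φ, hφ0, hker⟩ :=
    (LinearMap.range (arrEval f S)).exists_le_ker_of_lt_top (lt_top_iff_ne_top.mpr hns)
  have hzero : ∀ x : Fin k → ℂ, φ (arrEval f S x) = 0 := fun x =>
    hker (LinearMap.mem_range_self _ x)
  set c : { x // x ∈ S } → ℂ := fun i => φ (Pi.single i 1) with hc
  have hsum : ∑ i, c i • (f (i : Fin n)) = 0 := by
    apply LinearMap.ext
    intro x
    have h := hzero x
    rw [dual_pi_apply φ (arrEval f S x)] at h
    simp only [arrEval, LinearMap.pi_apply] at h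
    simp only [LinearMap.coe_sum, Finset.sum_apply, LinearMap.smul_apply, smul_eq_mul,
      LinearMap.zero_apply]
    rw [← h]
    exact Finset.sum_congr rfl fun i _ => mul_comm _ _
  have hc0 : ∀ i, c i = 0 := Fintype.linearIndependent_iff.mp hli c hsum
  apply hφ0
  apply LinearMap.ext
  intro y
  rw [dual_pi_apply φ y]
  simp only [LinearMap.zero_apply]
  have : ∀ i, φ (Pi.single i 1) = 0 := fun i => hc0 i
  simp [this]

lemma li_of_surj {n k : ℕ} (f : Fin n → ((Fin k → ℂ) →ₗ[ℂ] ℂ)) (S : Finset (Fin n))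
    (hs : Function.Surjective (arrEval f S)) :
    LinearIndependent ℂ (fun i : S => f (i : Fin n)) := by
  rw [Fintype.linearIndependent_iff]
  intro g hg j
  obtain ⟨x, hx⟩ := hs (Pi.single j 1)
  have h := LinearMap.congr_fun hg x
  have hfx : ∀ i : { x // x ∈ S }, f (i : Fin n) x = (Pi.single j 1 : { x // x ∈ S } → ℂ) i :=
    fun i => by simpa [arrEval] using congrFun hx i
  simp only [LinearMap.coe_sum, Finset.sum_apply, LinearMap.smul_apply, smul_eq_mul,
    LinearMap.zero_apply] at h
  rw [Finset.sum_congr rfl (fun i _ => by rw [hfx i])] at h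
  simpa [Pi.single_apply] using h

/-- The set of translates for which the subsystem indexed by `S` is solvable. -/
def solvableSet {n k : ℕ} (f : Fin n → ((Fin k → ℂ) →ₗ[ℂ] ℂ)) (S : Finset (Fin n)) :
    Submodule ℂ (Fin n → ℂ) where
  carrier := {t | ∃ x, ∀ i ∈ S, f i x = t i}
  add_mem' := by
    rintro a b ⟨x, hx⟩ ⟨y, hy⟩
    exact ⟨x + y, fun i hi => by simp [hx i hi, hy i hi]⟩
  zero_mem' := ⟨0, fun i hi => by simp⟩
  smul_mem' := by
    rintro c a ⟨x, hx⟩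
    exact ⟨c • x, fun i hi => by simp [hx i hi]⟩

/-- Theorem: for a central arrangement `Hᵢ = ker fᵢ` of `n > k` hyperplanes in
`ℂᵏ` with all `fᵢ ≠ 0`, every `k` of the functionals are linearly independent
iff some translate of the arrangement is generic in the classical sense. -/
theorem centralGeneric_iff_exists_genericTranslate {n k : ℕ} (hkn : k < n)
    (f : Fin n → ((Fin k → ℂ) →ₗ[ℂ] ℂ)) (hf0 : ∀ i, f i ≠ 0) :
    CentralGeneric f ↔ ∃ t : Fin n → ℂ, IsGenericTranslate f t := by
  have hk : Module.finrank ℂ (Fin k → ℂ) = k := by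
    simp [Module.finrank_pi]
  have hSk : ∀ S : Finset (Fin n), Module.finrank ℂ ({ x // x ∈ S } → ℂ) = S.card := by
    intro S
    rw [Module.finrank_pi, Fintype.card_coe]
  constructor
  · intro hcg
    -- every subsystem of card ≤ k has independent functionals
    have hli : ∀ S : Finset (Fin n), S.card ≤ k →
        LinearIndependent ℂ (fun i : S => f (i : Fin n)) := by
      intro S hS
      obtain ⟨T, hST, hT⟩ := Finset.exists_superset_card_eq hS (by simpa using hkn.le)
      have hliT := hcg T hT
      have heq : (fun i : S => f (i : Fin n)) =
          (fun i : T => f (i : Fin n)) ∘ (fun i : S => (⟨i.1, hST i.2⟩ : T)) := rfl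
      rw [heq]
      exact hliT.comp _ (fun a b hab => by
        apply Subtype.ext
        simpa using congrArg Subtype.val hab)
    -- "no k+1 have a common point" subspaces are proper
    have hproper : ∀ S : Finset (Fin n), S.card = k + 1 → solvableSet f S ≠ ⊤ := by
      intro S hS
      have hnsurj : ¬ Function.Surjective (arrEval f S) := by
        intro hsurj
        have h1 : Module.finrank ℂ (LinearMap.range (arrEval f S)) ≤
            Module.finrank ℂ (Fin k → ℂ) := LinearMap.finrank_range_le _
        rw [LinearMap.range_eq_top.mpr hsurj, finrank_top, hk, hSk S, hS] at h1
        omega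
      rw [Function.Surjective] at hnsurj
      push_neg at hnsurj
      obtain ⟨u, hu⟩ := hnsurj
      intro htop
      have hmem : (fun i => if h : i ∈ S then u ⟨i, h⟩ else 0) ∈ solvableSet f S := by
        rw [htop]; trivial
      obtain ⟨x, hx⟩ := hmem
      apply hu x
      ext i
      have := hx i.1 i.2
      simpa [arrEval] using this
    -- choose t avoiding all solvable sets of (k+1)-subsets
    have hexists : ∃ t : Fin n → ℂ, ∀ S : Finset (Fin n), S.card = k + 1 →
        t ∉ solvableSet f S := by
      by_contra hcon
      push_neg at hcon
      have hcover : ⋃ S : {S : Finset (Fin n) // S.card = k + 1},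
          ((solvableSet f S.1 : Submodule ℂ (Fin n → ℂ)) : Set (Fin n → ℂ)) = Set.univ := by
        ext t
        simp only [Set.mem_iUnion, Set.mem_univ, iff_true]
        obtain ⟨S, hS, ht⟩ := hcon t
        exact ⟨⟨S, hS⟩, ht⟩
      obtain ⟨⟨S, hS⟩, hStop⟩ := Subspace.exists_eq_top_of_iUnion_eq_univ hcover
      exact hproper S hS hStop
    obtain ⟨t, ht⟩ := hexists
    refine ⟨t, ?_, ?_⟩
    · intro S hS
      have hsurj := surj_of_li f S (hli S hS)
      obtain ⟨x₀, hx₀⟩ := hsurj (fun i : S => t i)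
      have hx₀' : ∀ i ∈ S, f i x₀ = t i := by
        intro i hi
        have := congrFun hx₀ ⟨i, hi⟩
        simpa [arrEval] using this
      refine ⟨LinearMap.ker (arrEval f S), x₀, ?_, ?_⟩
      · ext x
        simp only [Set.mem_setOf_eq, Set.mem_image, SetLike.mem_coe, LinearMap.mem_ker]
        constructor
        · intro hx
          refine ⟨x - x₀, ?_, by abel⟩
          ext i
          simp [arrEval, map_sub, hx i.1 i.2, hx₀' i.1 i.2]
        · rintro ⟨w, hw, rfl⟩
          intro i hi
          have h2 : f i w = 0 := by
            have := congrFun hw ⟨i, hi⟩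
            simpa [arrEval] using this
          simp [map_add, hx₀' i hi, h2]
      · have hrn := LinearMap.finrank_range_add_finrank_ker (arrEval f S)
        rw [LinearMap.range_eq_top.mpr hsurj, finrank_top, hSk S, hk] at hrn
        omega
    · intro S hS
      rw [Set.eq_empty_iff_forall_notMem]
      intro x hx
      exact ht S hS ⟨x, hx⟩
  · rintro ⟨t, h1, h2⟩
    intro S hS
    obtain ⟨W, x₀, hset, hrank⟩ := h1 S hS.le
    have hx₀ : ∀ i ∈ S, f i x₀ = t i := by
      have hmem : x₀ ∈ (fun w => x₀ + w) '' (W : Set (Fin k → ℂ)) :=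
        ⟨0, W.zero_mem, by simp⟩
      rw [← hset] at hmem
      exact hmem
    have hker : LinearMap.ker (arrEval f S) = W := by
      ext y
      simp only [LinearMap.mem_ker]
      constructor
      · intro hy
        have hmem : x₀ + y ∈ {x : Fin k → ℂ | ∀ i ∈ S, f i x = t i} := by
          intro i hi
          have h2' : f i y = 0 := by
            have := congrFun hy ⟨i, hi⟩
            simpa [arrEval] using this
          simp [map_add, hx₀ i hi, h2']
        rw [hset] at hmem
        obtain ⟨w, hw, hwy⟩ := hmem
        have hwyy : w = y := add_left_cancel hwy
        rwa [← hwyy]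
      · intro hy
        have hmem : x₀ + y ∈ {x : Fin k → ℂ | ∀ i ∈ S, f i x = t i} := by
          rw [hset]; exact ⟨y, hy, rfl⟩
        ext i
        have h2' : f (i : Fin n) x₀ + f (i : Fin n) y = t i.1 := by
          have := hmem i.1 i.2
          rwa [map_add] at this
        rw [hx₀ i.1 i.2] at h2'
        have h3 : f (i : Fin n) y = 0 := by
          have := add_eq_left.mp h2'
          exact this
        simpa [arrEval] using h3
    have hker0 : LinearMap.ker (arrEval f S) = ⊥ := by
      rw [hker, ← Submodule.finrank_eq_zero (R := ℂ), hrank, hS]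
      omega
    have hsurj : Function.Surjective (arrEval f S) := by
      rw [← LinearMap.range_eq_top]
      apply Submodule.eq_top_of_finrank_eq
      have hrn := LinearMap.finrank_range_add_finrank_ker (arrEval f S)
      rw [hker0, finrank_bot] at hrn
      rw [hSk S]
      omega
    exact li_of_surj f S hsurj
end
end

section
/- (Quadrilateral set closure.) Let Q₁, Q₂, Q₃, Q₄ ∈ ℝ² be four points, no three of which are collinear. Suppose P₁, P₂, P₃, P₄ ∈ ℝ² satisfy: P₂−P₁ is parallel to Q₂−Q₁, P₃−P₁ is parallel to Q₃−Q₁, P₄−P₁ is parallel to Q₄−Q₁, P₃−P₂ is parallel to Q₃−Q₂, and P₄−P₃ is parallel to Q₄−Q₃, where two vectors are called parallel if they are linearly dependent. Then P₄−P₂ is parallel to Q₄−Q₂; in fact there is a single scalar c ∈ ℝ such that Pⱼ−Pᵢ = c·(Qⱼ−Qᵢ) for all i, j ∈ {1,2,3,4}. -/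
noncomputable section

/-- Two vectors of `ℝ²` are parallel if they are linearly dependent. -/
def Parallel (u v : Fin 2 → ℝ) : Prop := ¬ LinearIndependent ℝ ![u, v]

lemma par_exists {u v : Fin 2 → ℝ} (hv : v ≠ 0) (h : Parallel u v) : ∃ c : ℝ, u = c • v := by
  unfold Parallel at h
  rw [linearIndependent_fin2] at h
  push_neg at h
  rcases h hv with ⟨c, hc⟩
  exact ⟨c, hc.symm⟩

lemma indep_of_not_collinear {x y z : Fin 2 → ℝ} (h : ¬ Collinear ℝ ({x, y, z} : Set (Fin 2 → ℝ))) :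
    LinearIndependent ℝ ![y - x, z - x] := by
  by_contra hli
  rw [linearIndependent_fin2] at hli
  push_neg at hli
  apply h
  rw [collinear_iff_of_mem (Set.mem_insert x {y, z})]
  by_cases hz : z - x = 0
  · refine ⟨y - x, ?_⟩
    intro p hp
    rcases hp with rfl | rfl | rfl
    · exact ⟨0, by simp⟩
    · exact ⟨1, by simp⟩
    · exact ⟨0, by simpa using sub_eq_zero.mp hz⟩
  · rcases hli hz with ⟨a, ha⟩
    refine ⟨z - x, ?_⟩
    intro p hp
    rcases hp with rfl | rfl | rfl
    · exact ⟨0, by simp⟩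
    · simp only [Matrix.cons_val_one, Matrix.head_cons, Matrix.cons_val_zero] at ha
      exact ⟨a, by rw [vadd_eq_add]; exact eq_add_of_sub_eq ha.symm⟩
    · exact ⟨1, by simp⟩

/-- Theorem (quadrilateral set closure): if `Q₁,…,Q₄ ∈ ℝ²` have no three
collinear, and `P₁,…,P₄ ∈ ℝ²` satisfy that `P₂-P₁ ∥ Q₂-Q₁`, `P₃-P₁ ∥ Q₃-Q₁`,
`P₄-P₁ ∥ Q₄-Q₁`, `P₃-P₂ ∥ Q₃-Q₂` and `P₄-P₃ ∥ Q₄-Q₃`, then also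
`P₄-P₂ ∥ Q₄-Q₂`; in fact there is a single scalar `c` with
`Pⱼ - Pᵢ = c • (Qⱼ - Qᵢ)` for all `i, j`. -/
theorem quadrilateral_set_closure (Q P : Fin 4 → (Fin 2 → ℝ))
    (hQ : ∀ i j l : Fin 4, i ≠ j → i ≠ l → j ≠ l →
      ¬ Collinear ℝ ({Q i, Q j, Q l} : Set (Fin 2 → ℝ)))
    (h12 : Parallel (P 1 - P 0) (Q 1 - Q 0))
    (h13 : Parallel (P 2 - P 0) (Q 2 - Q 0))
    (h14 : Parallel (P 3 - P 0) (Q 3 - Q 0))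
    (h23 : Parallel (P 2 - P 1) (Q 2 - Q 1))
    (h34 : Parallel (P 3 - P 2) (Q 3 - Q 2)) :
    Parallel (P 3 - P 1) (Q 3 - Q 1) ∧
      ∃ c : ℝ, ∀ i j : Fin 4, P j - P i = c • (Q j - Q i) := by
  have L012 := indep_of_not_collinear (hQ 0 1 2 (by decide) (by decide) (by decide))
  have L023 := indep_of_not_collinear (hQ 0 2 3 (by decide) (by decide) (by decide))
  have L123 := indep_of_not_collinear (hQ 1 2 3 (by decide) (by decide) (by decide))
  have L230 := indep_of_not_collinear (hQ 2 3 0 (by decide) (by decide) (by decide))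
  have hq1 : Q 1 - Q 0 ≠ 0 := by simpa using L012.ne_zero 0
  have hq2 : Q 2 - Q 0 ≠ 0 := by simpa using L012.ne_zero 1
  have hq3 : Q 3 - Q 0 ≠ 0 := by simpa using L023.ne_zero 1
  have hq21 : Q 2 - Q 1 ≠ 0 := by simpa using L123.ne_zero 0
  have hq32 : Q 3 - Q 2 ≠ 0 := by simpa using L230.ne_zero 0
  obtain ⟨a, ha⟩ := par_exists hq1 h12
  obtain ⟨b, hb⟩ := par_exists hq2 h13
  obtain ⟨e, he⟩ := par_exists hq3 h14
  obtain ⟨d, hd⟩ := par_exists hq21 h23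
  obtain ⟨f, hf⟩ := par_exists hq32 h34
  have e1 : d • (Q 2 - Q 1) = b • (Q 2 - Q 0) - a • (Q 1 - Q 0) := by
    rw [← hd, ← hb, ← ha]; abel
  have k1 := (LinearIndependent.pair_iff.mp L012) (a - d) (d - b)
    (by linear_combination (norm := module) e1)
  have e2 : f • (Q 3 - Q 2) = e • (Q 3 - Q 0) - b • (Q 2 - Q 0) := by
    rw [← hf, ← he, ← hb]; abel
  have k2 := (LinearIndependent.pair_iff.mp L023) (b - f) (f - e)
    (by linear_combination (norm := module) e2)
  have hab : a = b := by have := k1.1; have := k1.2; linarith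
  have hae : a = e := by have := k2.1; have := k2.2; linarith
  have h0 : ∀ i : Fin 4, P i - P 0 = a • (Q i - Q 0) := by
    intro i
    fin_cases i
    · simp
    · exact ha
    · rw [hab]; exact hb
    · rw [hae]; exact he
  have hgen : ∀ i j : Fin 4, P j - P i = a • (Q j - Q i) := by
    intro i j
    have h' : P j - P i = (P j - P 0) - (P i - P 0) := by abel
    rw [h', h0 i, h0 j, ← smul_sub]
    congr 1
    abel
  exact ⟨fun hli => (linearIndependent_fin2.mp hli).2 a (hgen 1 3).symm, ⟨a, hgen⟩⟩
end
end

section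
/- Let A⁰ be a central generic arrangement of n hyperplanes in ℂᵏ which is (r,s)-dependent, witnessed by an r-set T = {L₁,…,L_r}, an index l, and a subset S_l ⊆ {Lᵢ ∈ T : l ∈ Lᵢ} with |S_l| = s. Then for any fixed L_j ∈ S_l one has ⋂_{L∈T} D_L = (⋂_{L ∈ T∖S_l} D_L) ∩ D_{L_j}, and consequently the rank (codimension in ℂⁿ) of X = ⋂_{L∈T} D_L is at most r − s + 1. -/
noncomputable section

/-- An `r`-set. -/
def IsRSet {n : ℕ} (k : ℕ) {r : ℕ} (L : Fin r → Finset (Fin n)) : Prop :=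
  Function.Injective L ∧ (∀ i, (L i).card = k + 1) ∧
    (∀ i j, i ≠ j → (L i ∩ L j).Nonempty) ∧
    (∀ I : Finset (Fin r), I.card = r - 1 → I.biUnion L = Finset.univ.biUnion L)

/-- `D f S` as a submodule. -/
def Dsub {n k : ℕ} (f : Fin n → ((Fin k → ℂ) →ₗ[ℂ] ℂ)) (S : Finset (Fin n)) :
    Submodule ℂ (Fin n → ℂ) where
  carrier := D f S
  add_mem' := by
    rintro a b ⟨x, hx⟩ ⟨y, hy⟩
    exact ⟨x + y, fun i hi => by simp [hx i hi, hy i hi]⟩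
  zero_mem' := ⟨0, by simp⟩
  smul_mem' := by
    rintro c a ⟨x, hx⟩
    exact ⟨c • x, fun i hi => by simp [hx i hi]⟩

lemma coe_Dsub {n k : ℕ} (f : Fin n → ((Fin k → ℂ) →ₗ[ℂ] ℂ)) (S : Finset (Fin n)) :
    (Dsub f S : Set (Fin n → ℂ)) = D f S := rfl

/-- Common kernel of `k` generic functionals is zero. -/
lemma eq_zero_of_generic {n k : ℕ} {f : Fin n → ((Fin k → ℂ) →ₗ[ℂ] ℂ)}
    (hf : CentralGeneric f) {S : Finset (Fin n)} (hS : k ≤ S.card)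
    {x : Fin k → ℂ} (hx : ∀ i ∈ S, f i x = 0) : x = 0 := by
  obtain ⟨S', hS'sub, hS'card⟩ := Finset.exists_subset_card_eq hS
  have hind := hf S' hS'card
  have hspan : Submodule.span ℂ (Set.range fun i : S' => f (i : Fin n)) = ⊤ := by
    apply hind.span_eq_top_of_card_eq_finrank'
    rw [Fintype.card_coe, hS'card]
    simp [Subspace.dual_finrank_eq, Module.finrank_fintype_fun_eq_card]
  rw [← Module.forall_dual_apply_eq_zero_iff ℂ x]
  intro φ
  have hφ : φ ∈ Submodule.span ℂ (Set.range fun i : S' => f (i : Fin n)) := by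
    rw [hspan]; trivial
  induction hφ using Submodule.span_induction with
  | mem g hg =>
    obtain ⟨i, rfl⟩ := hg
    exact hx i (hS'sub i.2)
  | zero => simp
  | add _ _ _ _ h1 h2 => simp [h1, h2]
  | smul c _ _ h => simp [h]

/-- Codimension bound: `Dsub f S` has codimension at most one. -/
lemma finrank_Dsub {n k : ℕ} {f : Fin n → ((Fin k → ℂ) →ₗ[ℂ] ℂ)}
    (hf : CentralGeneric f) {S : Finset (Fin n)} (hS : S.card = k + 1) (hkn : k + 1 ≤ n) :
    n ≤ Module.finrank ℂ (Dsub f S) + 1 := by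
  classical
  set restr : (Fin n → ℂ) →ₗ[ℂ] ({x // x ∈ S} → ℂ) :=
    LinearMap.funLeft ℂ ℂ (Subtype.val : {x // x ∈ S} → Fin n)
  set K : Submodule ℂ (Fin n → ℂ) := LinearMap.ker restr with hKdef
  set Φ : (Fin k → ℂ) →ₗ[ℂ] (Fin n → ℂ) := LinearMap.pi (fun i => f i)
  set R : Submodule ℂ (Fin n → ℂ) := LinearMap.range Φ
  have hKD : K ≤ Dsub f S := by
    intro t ht
    refine ⟨0, fun i hi => ?_⟩
    have : restr t = 0 := ht
    have := congrFun this ⟨i, hi⟩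
    simpa [restr, LinearMap.funLeft] using this.symm
  have hRD : R ≤ Dsub f S := by
    rintro t ⟨x, rfl⟩
    exact ⟨x, fun i hi => rfl⟩
  -- finrank of K
  have hsurj : Function.Surjective restr :=
    LinearMap.funLeft_surjective_of_injective ℂ ℂ _ Subtype.val_injective
  have hKrank : Module.finrank ℂ K + (k + 1) = n := by
    have h1 := LinearMap.finrank_range_add_finrank_ker restr
    rw [LinearMap.range_eq_top.mpr hsurj, ← hKdef] at h1
    have h2 : Module.finrank ℂ (⊤ : Submodule ℂ ({x // x ∈ S} → ℂ)) = k + 1 := by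
      rw [finrank_top, Module.finrank_fintype_fun_eq_card, Fintype.card_coe, hS]
    rw [h2, Module.finrank_fintype_fun_eq_card, Fintype.card_fin] at h1
    omega
  -- Φ injective
  have hΦinj : Function.Injective Φ := by
    rw [← LinearMap.ker_eq_bot]
    rw [Submodule.eq_bot_iff]
    intro x hx
    apply eq_zero_of_generic hf (S := Finset.univ) (by simp; omega)
    intro i _
    exact congrFun (LinearMap.mem_ker.mp hx) i
  have hRrank : Module.finrank ℂ R = k := by
    rw [LinearMap.finrank_range_of_inj hΦinj, Module.finrank_fintype_fun_eq_card,
      Fintype.card_fin]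
  -- K ⊓ R = ⊥
  have hinf : K ⊓ R = ⊥ := by
    rw [Submodule.eq_bot_iff]
    rintro t ⟨htK, x, rfl⟩
    have hx0 : x = 0 := by
      apply eq_zero_of_generic hf (S := S) (by omega)
      intro i hi
      have : restr (Φ x) = 0 := htK
      have := congrFun this ⟨i, hi⟩
      simpa [restr, Φ, LinearMap.funLeft] using this
    simp [hx0]
  have hsum := Submodule.finrank_sup_add_finrank_inf_eq K R
  rw [hinf] at hsum
  simp only [finrank_bot, add_zero] at hsum
  have hle : Module.finrank ℂ ↥(K ⊔ R) ≤ Module.finrank ℂ (Dsub f S) :=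
    Submodule.finrank_mono (sup_le hKD hRD)
  omega

/-- Intersection of submodules of codimension at most one. -/
lemma finrank_biInf {n r : ℕ} (W : Fin r → Submodule ℂ (Fin n → ℂ))
    (hW : ∀ i, n ≤ Module.finrank ℂ (W i) + 1) (F : Finset (Fin r)) :
    n ≤ Module.finrank ℂ (⨅ i ∈ F, W i : Submodule ℂ (Fin n → ℂ)) + F.card := by
  classical
  induction F using Finset.induction_on with
  | empty =>
    have h : (⨅ i ∈ (∅ : Finset (Fin r)), W i) = ⊤ := by simp
    rw [h, Finset.card_empty, add_zero, finrank_top, Module.finrank_fintype_fun_eq_card,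
      Fintype.card_fin]
  | @insert a F ha ih =>
    rw [Finset.iInf_insert, Finset.card_insert_of_notMem ha]
    set X : Submodule ℂ (Fin n → ℂ) := ⨅ i ∈ F, W i
    have hsum := Submodule.finrank_sup_add_finrank_inf_eq (W a) X
    have hle : Module.finrank ℂ ↥(W a ⊔ X) ≤ n := by
      have := Submodule.finrank_le (W a ⊔ X : Submodule ℂ (Fin n → ℂ))
      rwa [Module.finrank_fintype_fun_eq_card, Fintype.card_fin] at this
    have := hW a
    omega

/-- Theorem: if `A⁰` is `(r,s)`-dependent, witnessed by the `r`-set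
`T = {L₁,…,L_r}`, the index `l` and the set `S_l` of cardinality `s`, then for
any `L_j ∈ S_l` one has `⋂_{L∈T} D_L = (⋂_{L∈T∖S_l} D_L) ∩ D_{L_j}`, and the
rank (codimension) of `X = ⋂_{L∈T} D_L` is at most `r - s + 1`. -/
theorem rank_le_of_dependency_witness {n k r s : ℕ} (hkn : k < n)
    (f : Fin n → ((Fin k → ℂ) →ₗ[ℂ] ℂ)) (hf : CentralGeneric f)
    (L : Fin r → Finset (Fin n)) (hT : IsRSet k L)
    (l : Fin n) (hl₁ : ∃ i, l ∈ L i) (hl₂ : ∃ i, l ∉ L i)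
    (Sl : Finset (Fin r)) (hSl : ∀ i ∈ Sl, l ∈ L i) (hcard : Sl.card = s)
    (hdep : ∀ j ∈ Sl,
      ((⋂ i ∈ (Finset.univ \ Sl : Finset (Fin r)), D f (L i)) ∩ D f (L j)) ⊆
        ⋂ i, D f (L i)) :
    (∀ j ∈ Sl, (⋂ i, D f (L i)) =
      (⋂ i ∈ (Finset.univ \ Sl : Finset (Fin r)), D f (L i)) ∩ D f (L j)) ∧
    ∃ W : Submodule ℂ (Fin n → ℂ), (W : Set (Fin n → ℂ)) = ⋂ i, D f (L i) ∧
      n - Module.finrank ℂ W ≤ r - s + 1 := by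
  classical
  have hW1 : ∀ i, n ≤ Module.finrank ℂ (Dsub f (L i)) + 1 := fun i =>
    finrank_Dsub hf (hT.2.1 i) (by omega)
  have hsr : s ≤ r := by
    rw [← hcard]
    simpa using Finset.card_le_card (Finset.subset_univ Sl)
  have part1 : ∀ j ∈ Sl, (⋂ i, D f (L i)) =
      (⋂ i ∈ (Finset.univ \ Sl : Finset (Fin r)), D f (L i)) ∩ D f (L j) := by
    intro j hj
    apply Set.Subset.antisymm
    · intro t ht
      simp only [Set.mem_iInter] at ht
      exact ⟨Set.mem_iInter₂.mpr fun i _ => ht i, ht j⟩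
    · exact hdep j hj
  refine ⟨part1, ?_⟩
  rcases Sl.eq_empty_or_nonempty with hSe | ⟨j, hj⟩
  · -- s = 0 : use the full intersection
    have hs0 : s = 0 := by rw [← hcard, hSe]; simp
    refine ⟨⨅ i ∈ (Finset.univ : Finset (Fin r)), Dsub f (L i), ?_, ?_⟩
    · ext t
      simp [Submodule.mem_iInf, Set.mem_iInter, ← coe_Dsub, SetLike.mem_coe]
    · have := finrank_biInf (fun i => Dsub f (L i)) hW1 Finset.univ
      rw [Finset.card_univ, Fintype.card_fin] at this
      omega
  · -- s ≥ 1
    have hjnot : j ∉ Finset.univ \ Sl := by simp [hj]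
    refine ⟨⨅ i ∈ insert j (Finset.univ \ Sl : Finset (Fin r)), Dsub f (L i), ?_, ?_⟩
    · have hset : (⋂ i ∈ insert j (Finset.univ \ Sl : Finset (Fin r)), D f (L i)) =
          (⋂ i ∈ (Finset.univ \ Sl : Finset (Fin r)), D f (L i)) ∩ D f (L j) := by
        rw [Set.inter_comm]
        simp [Set.biInter_insert]
      rw [← part1 j hj] at hset
      rw [← hset]
      ext t
      simp [Submodule.mem_iInf, Set.mem_iInter, ← coe_Dsub, SetLike.mem_coe]
    · have hcardF : (insert j (Finset.univ \ Sl : Finset (Fin r))).card = r - s + 1 := by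
        rw [Finset.card_insert_of_notMem hjnot, Finset.card_sdiff_of_subset (Finset.subset_univ Sl),
          Finset.card_univ, Fintype.card_fin, hcard]
      have := finrank_biInf (fun i => Dsub f (L i)) hW1
        (insert j (Finset.univ \ Sl : Finset (Fin r)))
      rw [hcardF] at this
      omega
end
end
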